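/- Let S = (X, →_Σ, ≤) be a WSTS whose completion is deterministic and has strong-strict monotonicity. Let I be an ideal of X and w ∈ Σ⁺ a nonempty word such that w(I) is defined and I ⊊ w(I). Then for every k ∈ ℕ, w^k(I) is defined and w^k(I) ⊊ w^{k+1}(I). -/
import Mathlib


/-- A quasi-ordered set is a well-quasi-ordering if every infinite sequence
contains an increasing pair. -/
def IsWqo (X : Type*) [Preorder X] : Prop :=
  ∀ f : ℕ → X, ∃ i j : ℕ, i < j ∧ f i ≤ f j

/-- A subset is downwards-closed if it is closed under going down. -/
def DownwardsClosed {X : Type*} [Preorder X] (D : Set X) : Prop :=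
  ∀ ⦃x y : X⦄, x ≤ y → y ∈ D → x ∈ D

/-- An ideal is a nonempty, directed, downwards-closed subset. -/
def IsIdeal {X : Type*} [Preorder X] (I : Set X) : Prop :=
  I.Nonempty ∧ DownwardsClosed I ∧
    ∀ ⦃x⦄, x ∈ I → ∀ ⦃y⦄, y ∈ I → ∃ z ∈ I, x ≤ z ∧ y ≤ z

/-- The downward closure of a set. -/
def downCl {X : Type*} [Preorder X] (D : Set X) : Set X :=
  {x : X | ∃ y ∈ D, x ≤ y}

/-- `Steps tr w x y` holds if `x →_w y`, i.e. reading the word `w` can lead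
from state `x` to state `y`. -/
def Steps {X A : Type*} (tr : A → X → X → Prop) : List A → X → X → Prop
  | [], x, y => x = y
  | a :: w, x, y => ∃ z, tr a x z ∧ Steps tr w z y

/-- (Ordinary WSTS) monotonicity: a transition from a smaller state can be
simulated from a bigger state by some sequence of transitions. -/
def MonotoneTS {X A : Type*} [Preorder X] (tr : A → X → X → Prop) : Prop :=
  ∀ (a : A) (x y x' : X), tr a x y → x ≤ x' →
    ∃ (w : List A) (y' : X), Steps tr w x' y' ∧ y ≤ y'

/-- A WSTS: the order is a wqo and the system is monotone. -/
def IsWSTS {X A : Type*} [Preorder X] (tr : A → X → X → Prop) : Prop :=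
  IsWqo X ∧ MonotoneTS tr

/-- Strong monotonicity: a transition from a smaller state can be simulated by a
transition with the same label from a bigger state. -/
def StrongMonotone {X A : Type*} [Preorder X] (tr : A → X → X → Prop) : Prop :=
  ∀ (a : A) (x y x' : X), tr a x y → x ≤ x' → ∃ y', tr a x' y' ∧ y ≤ y'

/-- The immediate `a`-successors of a set of states. -/
def post {X A : Type*} (tr : A → X → X → Prop) (a : A) (I : Set X) : Set X :=
  {y : X | ∃ x ∈ I, tr a x y}

/-- The `w`-successors of a set of states. -/
def postW {X A : Type*} (tr : A → X → X → Prop) (w : List A) (I : Set X) : Set X :=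
  {y : X | ∃ x ∈ I, Steps tr w x y}

/-- One step `I ⇒_a J` of the completion: `J` is a maximal ideal included in
`↓Post_a(I)`. -/
def CompStep {X A : Type*} [Preorder X] (tr : A → X → X → Prop)
    (a : A) (I J : Set X) : Prop :=
  IsIdeal J ∧ J ⊆ downCl (post tr a I) ∧
    ∀ K : Set X, IsIdeal K → K ⊆ downCl (post tr a I) → J ⊆ K → J = K

/-- `CompSteps tr w I J` holds if `I ⇒_w J` in the completion. -/
def CompSteps {X A : Type*} [Preorder X] (tr : A → X → X → Prop) :
    List A → Set X → Set X → Prop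
  | [], I, J => I = J
  | a :: w, I, J => ∃ K, CompStep tr a I K ∧ CompSteps tr w K J

/-- The completion is deterministic: each ideal has at most one `a`-successor. -/
def CompDeterministic {X A : Type*} [Preorder X] (tr : A → X → X → Prop) : Prop :=
  ∀ (a : A) (I J J' : Set X), CompStep tr a I J → CompStep tr a I J' → J = J'

/-- Strong-strict monotonicity of the completion: `I ⇒_a J` and `I' ⊇ I` imply
`I' ⇒_a J'` for some `J' ⊇ J`, which can moreover be chosen with `J' ⊋ J`
whenever `I' ⊋ I`. -/
def CompStrongStrictMono {X A : Type*} [Preorder X] (tr : A → X → X → Prop) : Prop :=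
  ∀ (a : A) (I I' J : Set X), CompStep tr a I J → IsIdeal I' → I ⊆ I' →
    ∃ J' : Set X, CompStep tr a I' J' ∧ J ⊆ J' ∧ (I ⊂ I' → J ⊂ J')

/-- The `k`-fold concatenation `w^k` of a word `w`. -/
def wpow {A : Type*} (w : List A) : ℕ → List A
  | 0 => []
  | k + 1 => w ++ wpow w k


private lemma compSteps_mono' {X A : Type*} [Preorder X] {tr : A → X → X → Prop}
    (hssm : CompStrongStrictMono tr) :
    ∀ (w : List A) (I I' J : Set X), CompSteps tr w I J → IsIdeal I' → I ⊆ I' →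
      ∃ J', CompSteps tr w I' J' ∧ J ⊆ J' ∧ (I ⊂ I' → J ⊂ J') := by
  intro w
  induction w with
  | nil =>
    intro I I' J h hI' hsub
    have h' : I = J := h
    subst h'
    exact ⟨I', rfl, hsub, fun h => h⟩
  | cons a w ih =>
    intro I I' J h hI' hsub
    obtain ⟨K, hK, hKJ⟩ := h
    obtain ⟨K', hK', hKK', hstrict⟩ := hssm a I I' K hK hI' hsub
    obtain ⟨J', hJ', hJJ', hstrict'⟩ := ih K K' J hKJ hK'.1 hKK'
    exact ⟨J', ⟨K', hK', hJ'⟩, hJJ', fun h => hstrict' (hstrict h)⟩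

private lemma compSteps_ideal' {X A : Type*} [Preorder X] {tr : A → X → X → Prop} :
    ∀ (w : List A), w ≠ [] → ∀ I J : Set X, CompSteps tr w I J → IsIdeal J := by
  intro w
  induction w with
  | nil => simp
  | cons a w ih =>
    intro _ I J h
    obtain ⟨K, hK, hKJ⟩ := h
    cases w with
    | nil =>
      have hKJ' : K = J := hKJ
      exact hKJ' ▸ hK.1
    | cons b w' => exact ih (by simp) K J hKJ

private lemma compSteps_append' {X A : Type*} [Preorder X] {tr : A → X → X → Prop} :
    ∀ (u v : List A) (I M K : Set X), CompSteps tr u I M → CompSteps tr v M K →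
      CompSteps tr (u ++ v) I K := by
  intro u
  induction u with
  | nil =>
    intro v I M K h1 h2
    have h1' : I = M := h1
    simpa [h1'] using h2
  | cons a u ih =>
    intro v I M K h1 h2
    obtain ⟨L, hL, hLM⟩ := h1
    exact ⟨L, hL, ih v L M K hLM h2⟩

private lemma wpow_succ' {A : Type*} (w : List A) :
    ∀ k : ℕ, wpow w (k + 1) = wpow w k ++ w := by
  intro k
  induction k with
  | zero => simp [wpow]
  | succ k ih =>
    show w ++ wpow w (k + 1) = wpow w (k + 1) ++ w
    conv_lhs => rw [ih]
    rw [← List.append_assoc]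
    rfl

/-- In a WSTS whose completion is deterministic and has strong-strict
monotonicity, if `I ⊊ w(I)` then the iterates of `w` on the ideal `I` form a
strictly increasing sequence: `w^k(I)` is defined and `w^k(I) ⊊ w^{k+1}(I)` for
every `k`. -/
theorem iterates_strictly_increasing {X A : Type*} [Preorder X] [Finite A]
    (tr : A → X → X → Prop) (hS : IsWSTS tr)
    (hdet : CompDeterministic tr) (hssm : CompStrongStrictMono tr)
    (I : Set X) (hI : IsIdeal I) (w : List A) (hw : w ≠ [])
    (J₁ : Set X) (hJ₁ : CompSteps tr w I J₁) (hIJ₁ : I ⊂ J₁) :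
    ∀ k : ℕ, ∃ J J' : Set X,
      CompSteps tr (wpow w k) I J ∧ CompSteps tr (wpow w (k + 1)) I J' ∧ J ⊂ J' := by

  have main : ∀ k : ℕ, ∃ J J' : Set X, CompSteps tr (wpow w k) I J ∧
      CompSteps tr w J J' ∧ J ⊂ J' := by
    intro k
    induction k with
    | zero => exact ⟨I, J₁, rfl, hJ₁, hIJ₁⟩
    | succ k ih =>
      obtain ⟨J, J', h1, h2, h3⟩ := ih
      have hJ'ideal : IsIdeal J' := compSteps_ideal' w hw J J' h2
      obtain ⟨J'', h4, _, h6⟩ := compSteps_mono' hssm w J J' J' h2 hJ'ideal h3.subset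
      refine ⟨J', J'', ?_, h4, h6 h3⟩
      rw [wpow_succ']
      exact compSteps_append' _ _ _ _ _ h1 h2
  intro k
  obtain ⟨J, J', h1, h2, h3⟩ := main k
  refine ⟨J, J', h1, ?_, h3⟩
  rw [wpow_succ']
  exact compSteps_append' _ _ _ _ _ h1 h2
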